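/- arXiv:2412.10657 — 3 statements merged into one kernel-verified Lean document; each statement's English description precedes it below -/
import Mathlib

section
/- For real parameters α > 1 and β ≥ 1, the normalization function F_{α,β} is strictly increasing on ℝ. -/
/-- The normalization function `F_{α,β}`. -/
noncomputable def normF (α β : ℝ) (x : ℝ) : ℝ :=
  if x ≤ α then x / β else α / β - 1 + 2 / (1 + Real.exp (-(2 * (x - α)) / β))

/-- **The normalization function is strictly increasing** for `α > 1`, `β ≥ 1`. -/
theorem normF_strictMono (α β : ℝ) (hα : 1 < α) (hβ : 1 ≤ β) :
    StrictMono (normF α β) := by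
  have hβ0 : (0:ℝ) < β := lt_of_lt_of_le one_pos hβ
  intro x y hxy
  unfold normF
  -- helper: for z > α, 2 / (1 + exp(-(2(z-α))/β)) > 1
  have key : ∀ z : ℝ, α < z → 1 < 2 / (1 + Real.exp (-(2 * (z - α)) / β)) := by
    intro z hz
    have hlt : Real.exp (-(2 * (z - α)) / β) < 1 := by
      rw [Real.exp_lt_one_iff]
      have : 0 < 2 * (z - α) := by linarith
      exact div_neg_of_neg_of_pos (by linarith) hβ0
    have hpos : 0 < 1 + Real.exp (-(2 * (z - α)) / β) :=
      by positivity
    rw [lt_div_iff₀ hpos]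
    linarith
  by_cases hx : x ≤ α
  · by_cases hy : y ≤ α
    · simp only [hx, hy, if_true]
      exact (div_lt_div_iff_of_pos_right hβ0).mpr hxy
    · push_neg at hy
      simp only [hx, if_true, hy.not_ge, if_false]
      have h1 := key y hy
      have h2 : x / β ≤ α / β := (div_le_div_iff_of_pos_right hβ0).mpr hx
      linarith
  · push_neg at hx
    have hy : ¬ y ≤ α := by linarith
    simp only [hx.not_ge, hy, if_false]
    have he : Real.exp (-(2 * (y - α)) / β) < Real.exp (-(2 * (x - α)) / β) :=
      Real.exp_lt_exp.mpr ((div_lt_div_iff_of_pos_right hβ0).mpr (by linarith))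
    have hpy : 0 < 1 + Real.exp (-(2 * (y - α)) / β) := by positivity
    have : 2 / (1 + Real.exp (-(2 * (x - α)) / β)) < 2 / (1 + Real.exp (-(2 * (y - α)) / β)) :=
      div_lt_div_of_pos_left (by norm_num) hpy (by linarith)
    linarith
end

section
/- For real parameters α > 1 and β ≥ 1, the normalization function F_{α,β} is differentiable at every real x, and its derivative satisfies F_{α,β}'(x) ≤ 1/β for all x ∈ ℝ. In particular, F_{α,β} is differentiable at x = α, where both one-sided derivatives equal 1/β. -/
private lemma normF_aux_hasDerivAt (α β : ℝ) (hβ0 : (0:ℝ) < β) (x : ℝ) :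
    HasDerivAt (fun x => α / β - 1 + 2 / (1 + Real.exp (-(2 * (x - α)) / β)))
      (4 / β * (Real.exp (-(2 * (x - α)) / β) / (1 + Real.exp (-(2 * (x - α)) / β)) ^ 2)) x := by
  have hu : HasDerivAt (fun x : ℝ => -(2 * (x - α)) / β) (-(2 * 1) / β) x :=
    ((((hasDerivAt_id x).sub_const α).const_mul 2).neg).div_const β
  have he : HasDerivAt (fun x : ℝ => Real.exp (-(2 * (x - α)) / β))
      (Real.exp (-(2 * (x - α)) / β) * (-(2 * 1) / β)) x := hu.exp
  have hden : HasDerivAt (fun x : ℝ => 1 + Real.exp (-(2 * (x - α)) / β))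
      (Real.exp (-(2 * (x - α)) / β) * (-(2 * 1) / β)) x := he.const_add 1
  have hne : (1 + Real.exp (-(2 * (x - α)) / β)) ≠ 0 := by positivity
  have hq := ((hasDerivAt_const x (2:ℝ)).div hden hne).const_add (α / β - 1)
  refine hq.congr_deriv ?_
  field_simp
  ring

/-- **Differentiability and derivative bound of the normalization function:**
`F_{α,β}` is differentiable at every real `x` with `F_{α,β}'(x) ≤ 1/β`; in particular it is
differentiable at `x = α`, where both one-sided derivatives equal `1/β`. -/
theorem normF_differentiable_deriv_le (α β : ℝ) (hα : 1 < α) (hβ : 1 ≤ β) :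
    (∀ x : ℝ, DifferentiableAt ℝ (normF α β) x) ∧
      (∀ x : ℝ, deriv (normF α β) x ≤ 1 / β) ∧
      HasDerivWithinAt (normF α β) (1 / β) (Set.Iic α) α ∧
      HasDerivWithinAt (normF α β) (1 / β) (Set.Ici α) α := by
  have hβ0 : (0:ℝ) < β := lt_of_lt_of_le one_pos hβ
  set g : ℝ → ℝ := fun x => α / β - 1 + 2 / (1 + Real.exp (-(2 * (x - α)) / β)) with hg
  set g' : ℝ → ℝ := fun x =>
    4 / β * (Real.exp (-(2 * (x - α)) / β) / (1 + Real.exp (-(2 * (x - α)) / β)) ^ 2) with hg'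
  -- derivative for x < α
  have hlt : ∀ x : ℝ, x < α → HasDerivAt (normF α β) (1 / β) x := by
    intro x hx
    have h1 : HasDerivAt (fun y : ℝ => y / β) (1 / β) x := (hasDerivAt_id x).div_const β
    refine h1.congr_of_eventuallyEq ?_
    filter_upwards [eventually_lt_nhds hx] with y hy
    simp [normF, hy.le]
  -- derivative for x > α
  have hgt : ∀ x : ℝ, α < x → HasDerivAt (normF α β) (g' x) x := by
    intro x hx
    refine (normF_aux_hasDerivAt α β hβ0 x).congr_of_eventuallyEq ?_
    filter_upwards [eventually_gt_nhds hx] with y hy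
    simp [normF, not_le.mpr hy]
  -- one-sided at α
  have hIic : HasDerivWithinAt (normF α β) (1 / β) (Set.Iic α) α := by
    have h1 : HasDerivAt (fun y : ℝ => y / β) (1 / β) α := (hasDerivAt_id α).div_const β
    refine (h1.hasDerivWithinAt).congr (fun y hy => ?_) (by simp [normF])
    simp only [normF, if_pos (Set.mem_Iic.mp hy)]
  have hgα : g' α = 1 / β := by
    simp only [hg', sub_self, mul_zero, neg_zero, zero_div, Real.exp_zero]
    norm_num
  have heq : Set.EqOn (normF α β) g (Set.Ici α) := by
    intro y hy
    by_cases h : y ≤ α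
    · have : y = α := le_antisymm h hy
      subst this
      simp [normF, hg, Real.exp_zero]
      norm_num
    · simp [normF, h, hg]
  have hIci : HasDerivWithinAt (normF α β) (1 / β) (Set.Ici α) α := by
    have := (normF_aux_hasDerivAt α β hβ0 α).hasDerivWithinAt (s := Set.Ici α)
    rw [show (4 / β * (Real.exp (-(2 * (α - α)) / β) / (1 + Real.exp (-(2 * (α - α)) / β)) ^ 2))
        = 1 / β by simp [Real.exp_zero]; norm_num] at this
    exact this.congr (fun y hy => heq hy) (heq (Set.self_mem_Ici))
  have hatα : HasDerivAt (normF α β) (1 / β) α := by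
    have := hIic.union hIci
    rw [Set.Iic_union_Ici] at this
    exact hasDerivWithinAt_univ.mp this
  refine ⟨?_, ?_, hIic, hIci⟩
  · intro x
    rcases lt_trichotomy x α with h | h | h
    · exact (hlt x h).differentiableAt
    · subst h; exact hatα.differentiableAt
    · exact (hgt x h).differentiableAt
  · intro x
    rcases lt_trichotomy x α with h | h | h
    · rw [(hlt x h).deriv]
    · subst h; rw [hatα.deriv]
    · rw [(hgt x h).deriv]
      set e := Real.exp (-(2 * (x - α)) / β) with he
      have he0 : 0 < e := Real.exp_pos _
      have h1 : e / (1 + e) ^ 2 ≤ 1 / 4 := by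
        rw [div_le_div_iff₀ (by positivity) (by norm_num)]
        nlinarith [sq_nonneg (1 - e)]
      calc 4 / β * (e / (1 + e) ^ 2) ≤ 4 / β * (1 / 4) :=
            mul_le_mul_of_nonneg_left h1 (by positivity)
        _ = 1 / β := by ring
end

section
/- For real parameters α > 1 and β ≥ 1 and any real numbers x < y, the normalization function satisfies F_{α,β}(y) − F_{α,β}(x) ≤ (y − x)/β. -/
private lemma sigmoid_aux_mono : Monotone (fun u : ℝ => u / 2 - 2 / (1 + Real.exp (-u))) := by
  have hne : ∀ u : ℝ, (1 : ℝ) + Real.exp (-u) ≠ 0 := fun u => by positivity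
  have hd : ∀ u : ℝ, HasDerivAt (fun u : ℝ => u / 2 - 2 / (1 + Real.exp (-u)))
      (1 / 2 - (0 * (1 + Real.exp (-u)) - 2 * (Real.exp (-u) * (-1))) / (1 + Real.exp (-u)) ^ 2)
      u := by
    intro u
    exact ((hasDerivAt_id u).div_const 2).sub
      ((hasDerivAt_const u 2).div (((hasDerivAt_neg u).exp).const_add 1) (hne u))
  apply monotone_of_deriv_nonneg (fun u => (hd u).differentiableAt)
  intro u
  rw [(hd u).deriv]
  have he : 0 < Real.exp (-u) := Real.exp_pos _
  have h1 : (0 * (1 + Real.exp (-u)) - 2 * (Real.exp (-u) * (-1))) / (1 + Real.exp (-u)) ^ 2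
      = 2 * Real.exp (-u) / (1 + Real.exp (-u)) ^ 2 := by ring
  rw [h1, sub_nonneg, div_le_iff₀ (by positivity)]
  nlinarith [sq_nonneg (1 - Real.exp (-u))]

private lemma sigmoid_diff_le {a b : ℝ} (hab : a ≤ b) :
    2 / (1 + Real.exp (-b)) - 2 / (1 + Real.exp (-a)) ≤ (b - a) / 2 := by
  have := sigmoid_aux_mono hab
  simp only at this
  linarith

/-- **Lipschitz-type bound for the normalization function:** for `x < y`,
`F_{α,β}(y) − F_{α,β}(x) ≤ (y − x)/β`. -/
theorem normF_sub_le (α β : ℝ) (hα : 1 < α) (hβ : 1 ≤ β) (x y : ℝ) (hxy : x < y) :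
    normF α β y - normF α β x ≤ (y - x) / β := by
  have hβ0 : (0 : ℝ) < β := lt_of_lt_of_le one_pos hβ
  unfold normF
  by_cases hy : y ≤ α
  · have hx : x ≤ α := le_of_lt (lt_of_lt_of_le hxy hy)
    rw [if_pos hy, if_pos hx]
    rw [div_sub_div_same]
  · rw [if_neg hy]
    by_cases hx : x ≤ α
    · rw [if_pos hx]
      have key : 2 / (1 + Real.exp (-(2 * (y - α)) / β)) - 2 / (1 + Real.exp (-(0:ℝ)))
          ≤ (2 * (y - α) / β - 0) / 2 := by
        have h0 : -(2 * (y - α)) / β = -(2 * (y - α) / β) := by ring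
        rw [h0]
        push_neg at hy
        exact sigmoid_diff_le (div_nonneg (by nlinarith) hβ0.le)
      simp only [neg_zero, Real.exp_zero] at key
      have hβne : β ≠ 0 := ne_of_gt hβ0
      have : (2 * (y - α) / β - 0) / 2 = (y - α) / β := by field_simp; ring
      rw [this] at key
      have h2 : (2:ℝ) / (1 + 1) = 1 := by norm_num
      rw [h2] at key
      have h3 : (y - x) / β = α / β - x / β + (y - α) / β := by ring
      linarith
    · rw [if_neg hx]
      push_neg at hx
      have key : 2 / (1 + Real.exp (-(2 * (y - α)) / β)) - 2 / (1 + Real.exp (-(2 * (x - α)) / β))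
          ≤ (2 * (y - α) / β - 2 * (x - α) / β) / 2 := by
        have hy0 : -(2 * (y - α)) / β = -(2 * (y - α) / β) := by ring
        have hx0 : -(2 * (x - α)) / β = -(2 * (x - α) / β) := by ring
        rw [hy0, hx0]
        apply sigmoid_diff_le
        gcongr

      have heq : (2 * (y - α) / β - 2 * (x - α) / β) / 2 = (y - x) / β := by
        field_simp; ring
      rw [heq] at key
      linarith
end
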